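/- Let d_S = 2, fix q = 1/2 and a utility u with u(0) = 0 such that Z = u((ε₂ − ε₁)/2) − u(−(ε₂ − ε₁)/2) = 0, and set X = u(ε₂ − ε₁), Y = u(ε₂ − ε₁) − u(−(ε₂ − ε₁)). If either X − qY ≤ 0 for all q ∈ [0,1], or X − qY > 0 for all q ∈ [0,1], then the maximum daemonic gain vanishes, δ𝓤(ρ_SA) = 0, for every bipartite density matrix ρ_SA on ℂ² ⊗ ℂ^{d_A}. -/

import Mathlib

/-!
For `q = 1/2`, `u 0 = 0` and `Z = 0`, unitarity of `U` kills the coefficients of the coherences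
of `ρ` in `⟨u(w)⟩_{ρ,U}`, which becomes `|⟨ε₁|U|ε₀⟩|² · S(ρ)` with
`S(ρ) = ⟨ε₀|ρ|ε₀⟩ u(-Δ) + ⟨ε₁|ρ|ε₁⟩ u(Δ)`, `Δ = ε₁ - ε₀`. Hence `𝓤(ρ) = max(0, S(ρ))`, attained by
the identity or the swap of the two levels. Since `X - tY = (1 - t) u(Δ) + t u(-Δ)`, the hypothesis
says that `u(Δ)` and `u(-Δ)` have a common sign, so the linear functional `S` has a constant sign
on positive matrices. Therefore, for every measurement of the ancilla,
`∑ₐ pₐ max(0, S(ρ_{S|a})) = ∑ₐ max(0, S(pₐ ρ_{S|a})) = max(0, S(ρ_S)) = 𝓤(ρ_S)`.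
-/

open Matrix BigOperators Finset Kronecker
open scoped ComplexOrder

noncomputable section

namespace Daemonic

/-- The outer product `|x⟩⟨y|` as a matrix. -/
def ketbra {ι : Type*} [Fintype ι] (x y : ι → ℂ) : Matrix ι ι ℂ :=
  Matrix.vecMulVec x (star y)

/-- A family of vectors is orthonormal. -/
def ONFam {ι κ : Type*} [Fintype ι] [DecidableEq κ] (v : κ → ι → ℂ) : Prop :=
  ∀ i j, star (v i) ⬝ᵥ v j = if i = j then 1 else 0

/-- A density matrix: positive semidefinite with unit trace. -/
def IsDensity {ι : Type*} [Fintype ι] (ρ : Matrix ι ι ℂ) : Prop :=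
  ρ.PosSemidef ∧ ρ.trace = 1

/-- The matrix element `⟨x|M|y⟩`. -/
def matElem {ι : Type*} [Fintype ι] (M : Matrix ι ι ℂ) (x y : ι → ℂ) : ℂ :=
  star x ⬝ᵥ (M *ᵥ y)

/-- The Hamiltonian `H_S = ∑ₖ εₖ |εₖ⟩⟨εₖ|`. -/
def ham {n : ℕ} (ε : Fin n → ℝ) (v : Fin n → Fin n → ℂ) : Matrix (Fin n) (Fin n) ℂ :=
  ∑ k, (ε k : ℂ) • ketbra (v k) (v k)

/-- `e^{t H_S} = ∑ₖ e^{t εₖ} |εₖ⟩⟨εₖ|` (functional calculus in the eigenbasis of `H_S`). -/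
def expHam {n : ℕ} (ε : Fin n → ℝ) (v : Fin n → Fin n → ℂ) (t : ℝ) :
    Matrix (Fin n) (Fin n) ℂ :=
  ∑ k, (Real.exp (t * ε k) : ℂ) • ketbra (v k) (v k)

/-- The expected utility `⟨u(w)⟩_{ρ,U}` for quasiprobability parameter `q`,
with respect to the eigenvalues `ε` and orthonormal eigenvectors `v` of `H_S`. -/
def expUtil {n : ℕ} (u : ℝ → ℝ) (q : ℝ) (ε : Fin n → ℝ) (v : Fin n → Fin n → ℂ)
    (ρ U : Matrix (Fin n) (Fin n) ℂ) : ℝ :=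
  ∑ i, ∑ j, ∑ k,
    (matElem ρ (v i) (v j) * matElem Uᴴ (v j) (v k) * matElem U (v k) (v i)).re *
      u (q * ε i + (1 - q) * ε j - ε k)

/-- The optimal expected utility `𝓤(ρ) = max over unitaries U of ⟨u(w)⟩_{ρ,U}`. -/
def optUtil {n : ℕ} (u : ℝ → ℝ) (q : ℝ) (ε : Fin n → ℝ) (v : Fin n → Fin n → ℂ)
    (ρ : Matrix (Fin n) (Fin n) ℂ) : ℝ :=
  ⨆ U : Matrix.unitaryGroup (Fin n) ℂ, expUtil u q ε v ρ (U : Matrix (Fin n) (Fin n) ℂ)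

/-- The exponential utility `u(w) = (1 - e^{-r w})/r`. -/
def expUtility (r : ℝ) : ℝ → ℝ := fun w => (1 - Real.exp (-r * w)) / r

/-- The partial trace over the ancilla. -/
def ptraceA {dS dA : ℕ} (ρSA : Matrix (Fin dS × Fin dA) (Fin dS × Fin dA) ℂ) :
    Matrix (Fin dS) (Fin dS) ℂ :=
  Matrix.of fun i j => ∑ a, ρSA (i, a) (j, a)

/-- The unnormalized conditional state `Tr_A((I ⊗ Π_a) ρ_SA (I ⊗ Π_a))`, where
`Π_a = |a⟩⟨a|` projects onto the vector `w a` of an orthonormal basis `w` of the ancilla. -/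
def condUnnorm {dS dA : ℕ} (w : Fin dA → Fin dA → ℂ)
    (ρSA : Matrix (Fin dS × Fin dA) (Fin dS × Fin dA) ℂ) (a : Fin dA) :
    Matrix (Fin dS) (Fin dS) ℂ :=
  Matrix.of fun i j => ∑ c, ∑ d, ρSA (i, c) (j, d) * (w a d * star (w a c))

/-- The outcome probability `p_a = Tr((I ⊗ Π_a) ρ_SA)`. -/
def prob {dS dA : ℕ} (w : Fin dA → Fin dA → ℂ)
    (ρSA : Matrix (Fin dS × Fin dA) (Fin dS × Fin dA) ℂ) (a : Fin dA) : ℝ :=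
  ((condUnnorm w ρSA a).trace).re

/-- The conditional state `ρ_{S|a}`. -/
def condState {dS dA : ℕ} (w : Fin dA → Fin dA → ℂ)
    (ρSA : Matrix (Fin dS × Fin dA) (Fin dS × Fin dA) ℂ) (a : Fin dA) :
    Matrix (Fin dS) (Fin dS) ℂ :=
  ((prob w ρSA a : ℂ))⁻¹ • condUnnorm w ρSA a

/-- The daemonic expected utility `𝓤_{{Π_a}}(ρ_SA) = ∑_a p_a 𝓤(ρ_{S|a})`. -/
def daemonicUtil {dS dA : ℕ} (u : ℝ → ℝ) (q : ℝ) (ε : Fin dS → ℝ)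
    (v : Fin dS → Fin dS → ℂ) (w : Fin dA → Fin dA → ℂ)
    (ρSA : Matrix (Fin dS × Fin dA) (Fin dS × Fin dA) ℂ) : ℝ :=
  ∑ a, prob w ρSA a * optUtil u q ε v (condState w ρSA a)

/-- The maximum daemonic gain `δ𝓤(ρ_SA)`, maximizing over all orthonormal bases of the
ancilla (equivalently, over the rows of all unitary matrices). -/
def daemonicGain {dS dA : ℕ} (u : ℝ → ℝ) (q : ℝ) (ε : Fin dS → ℝ)
    (v : Fin dS → Fin dS → ℂ)
    (ρSA : Matrix (Fin dS × Fin dA) (Fin dS × Fin dA) ℂ) : ℝ :=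
  (⨆ V : Matrix.unitaryGroup (Fin dA) ℂ,
      daemonicUtil u q ε v (fun a => (V : Matrix (Fin dA) (Fin dA) ℂ) a) ρSA) -
    optUtil u q ε v (ptraceA ρSA)

/-- The ergotropy of a (possibly unnormalized) state `σ` with respect to a Hamiltonian `H`:
`ℰ_H(σ) = max over unitaries U of (Tr(Hσ) - Tr(H U σ U†))`. -/
def ergotropyH {n : ℕ} (H σ : Matrix (Fin n) (Fin n) ℂ) : ℝ :=
  ⨆ U : Matrix.unitaryGroup (Fin n) ℂ,
    ((H * σ).trace -
      (H * ((U : Matrix (Fin n) (Fin n) ℂ) * σ * (U : Matrix (Fin n) (Fin n) ℂ)ᴴ)).trace).re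

/-- A separable bipartite state: a convex combination of product states. -/
def IsSeparable {dS dA : ℕ} (ρSA : Matrix (Fin dS × Fin dA) (Fin dS × Fin dA) ℂ) : Prop :=
  ∃ (m : ℕ) (p : Fin m → ℝ) (σ : Fin m → Matrix (Fin dS) (Fin dS) ℂ)
    (τ : Fin m → Matrix (Fin dA) (Fin dA) ℂ),
    (∀ k, 0 ≤ p k) ∧ (∑ k, p k = 1) ∧ (∀ k, IsDensity (σ k)) ∧ (∀ k, IsDensity (τ k)) ∧
    ρSA = ∑ k, (p k : ℂ) • (σ k ⊗ₖ τ k)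

/-- A classical-quantum state `ρ_SA = ∑ₖ pₖ Pₖ ⊗ ρᴬₖ` with `Pₖ` mutually orthogonal
rank-one projectors summing to the identity. -/
def IsClassicalQuantum {dS dA : ℕ}
    (ρSA : Matrix (Fin dS × Fin dA) (Fin dS × Fin dA) ℂ) : Prop :=
  ∃ (p : Fin dS → ℝ) (ψ : Fin dS → Fin dS → ℂ) (τ : Fin dS → Matrix (Fin dA) (Fin dA) ℂ),
    (∀ k, 0 ≤ p k) ∧ (∑ k, p k = 1) ∧ ONFam ψ ∧ (∀ k, IsDensity (τ k)) ∧
    ρSA = ∑ k, (p k : ℂ) • (ketbra (ψ k) (ψ k) ⊗ₖ τ k)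

/-- The dephasing map associated with an orthonormal basis `v`. -/
def dephase {n : ℕ} (v : Fin n → Fin n → ℂ) (ρ : Matrix (Fin n) (Fin n) ℂ) :
    Matrix (Fin n) (Fin n) ℂ :=
  ∑ k, ketbra (v k) (v k) * ρ * ketbra (v k) (v k)

section BasisChange

variable {n : ℕ} {v : Fin n → Fin n → ℂ}

def basisMatrix (v : Fin n → Fin n → ℂ) : Matrix (Fin n) (Fin n) ℂ := (Matrix.of v)ᵀ

lemma matElem_eq_conj_apply (A : Matrix (Fin n) (Fin n) ℂ) (i j : Fin n) :
    matElem A (v i) (v j) = ((basisMatrix v)ᴴ * A * basisMatrix v) i j := by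
  simp only [matElem, basisMatrix, dotProduct, mulVec, Matrix.mul_apply, conjTranspose_apply,
    transpose_apply, of_apply, Pi.star_apply, Finset.mul_sum, Finset.sum_mul]
  rw [Finset.sum_comm]
  exact Finset.sum_congr rfl fun _ _ => Finset.sum_congr rfl fun _ _ => by ring

lemma basisMatrix_mem_unitaryGroup (hv : ONFam v) : basisMatrix v ∈ unitaryGroup (Fin n) ℂ := by
  rw [mem_unitaryGroup_iff']
  ext i j
  simpa [basisMatrix, Matrix.mul_apply, dotProduct, Matrix.one_apply] using hv i j

lemma conj_mem_unitaryGroup (hv : ONFam v) {U : Matrix (Fin n) (Fin n) ℂ}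
    (hU : U ∈ unitaryGroup (Fin n) ℂ) :
    (basisMatrix v)ᴴ * U * basisMatrix v ∈ unitaryGroup (Fin n) ℂ :=
  mul_mem (mul_mem (Unitary.star_mem (basisMatrix_mem_unitaryGroup hv)) hU)
    (basisMatrix_mem_unitaryGroup hv)

lemma matElem_basisMatrix_conj (hv : ONFam v) (A : Matrix (Fin n) (Fin n) ℂ) (i j : Fin n) :
    matElem (basisMatrix v * A * (basisMatrix v)ᴴ) (v i) (v j) = A i j := by
  have hW : (basisMatrix v)ᴴ * basisMatrix v = 1 :=
    mem_unitaryGroup_iff'.mp (basisMatrix_mem_unitaryGroup hv)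
  rw [matElem_eq_conj_apply]
  simp only [← Matrix.mul_assoc, hW, Matrix.one_mul]
  simp only [Matrix.mul_assoc, hW, Matrix.mul_one]

lemma matElem_one (hv : ONFam v) (i j : Fin n) :
    matElem 1 (v i) (v j) = if i = j then 1 else 0 := by
  rw [matElem, one_mulVec, hv]

lemma normSq_matElem_le_one (hv : ONFam v) {U : Matrix (Fin n) (Fin n) ℂ}
    (hU : U ∈ unitaryGroup (Fin n) ℂ) (i j : Fin n) :
    Complex.normSq (matElem U (v i) (v j)) ≤ 1 := by
  rw [matElem_eq_conj_apply, Complex.normSq_eq_norm_sq]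
  exact pow_le_one₀ (norm_nonneg _) (entry_norm_bound_of_unitary (conj_mem_unitaryGroup hv hU) i j)

lemma trace_eq_sum_matElem (hv : ONFam v) (A : Matrix (Fin n) (Fin n) ℂ) :
    A.trace = ∑ k, matElem A (v k) (v k) := by
  have hW : basisMatrix v * (basisMatrix v)ᴴ = 1 :=
    mem_unitaryGroup_iff.mp (basisMatrix_mem_unitaryGroup hv)
  calc A.trace = (basisMatrix v * (basisMatrix v)ᴴ * A).trace := by rw [hW, one_mul]
    _ = ((basisMatrix v)ᴴ * A * basisMatrix v).trace := (trace_mul_cycle _ _ _).symm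
    _ = ∑ k, matElem A (v k) (v k) := by
      simp only [Matrix.trace, Matrix.diag, matElem_eq_conj_apply]

lemma matElem_smul (c : ℂ) (A : Matrix (Fin n) (Fin n) ℂ) (x y : Fin n → ℂ) :
    matElem (c • A) x y = c * matElem A x y := by
  simp only [matElem, smul_mulVec, dotProduct_smul, smul_eq_mul]

lemma matElem_sum {ι : Type*} (s : Finset ι) (A : ι → Matrix (Fin n) (Fin n) ℂ)
    (x y : Fin n → ℂ) : matElem (∑ a ∈ s, A a) x y = ∑ a ∈ s, matElem (A a) x y := by
  simp only [matElem, sum_mulVec, dotProduct_sum]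

end BasisChange

lemma sum_re_mul_star_mul_of_unitary {U : Matrix (Fin 2) (Fin 2) ℂ}
    (hU : U ∈ unitaryGroup (Fin 2) ℂ) (ρ : Matrix (Fin 2) (Fin 2) ℂ)
    (w : Fin 2 → Fin 2 → Fin 2 → ℝ) (h000 : w 0 0 0 = 0) (h111 : w 1 1 1 = 0)
    (h01 : w 0 1 0 = w 0 1 1) (h10 : w 1 0 0 = w 1 0 1) :
    ∑ i, ∑ j, ∑ k, (ρ i j * star (U k j) * U k i).re * w i j k =
      Complex.normSq (U 1 0) * ((ρ 0 0).re * w 0 0 1 + (ρ 1 1).re * w 1 1 0) := by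
  have hsU : star U * U = 1 := mem_unitaryGroup_iff'.mp hU
  have hUs : U * star U = 1 := mem_unitaryGroup_iff.mp hU
  have col0 := congr_fun₂ hsU 0 0
  have cross10 := congr_fun₂ hsU 1 0
  have cross01 := congr_fun₂ hsU 0 1
  have row0 := congr_fun₂ hUs 0 0
  simp only [star_eq_conjTranspose, Matrix.mul_apply, conjTranspose_apply, Fin.sum_univ_two,
    one_apply_eq, one_apply_ne (by decide : (1 : Fin 2) ≠ 0),
    one_apply_ne (by decide : (0 : Fin 2) ≠ 1)] at col0 cross10 cross01 row0
  have key : ∑ i, ∑ j, ∑ k, ρ i j * star (U k j) * U k i * (w i j k : ℂ) =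
      (Complex.normSq (U 1 0) : ℂ) * (ρ 0 0 * w 0 0 1 + ρ 1 1 * w 1 1 0) := by
    simp only [Fin.sum_univ_two, h000, h111, h01, h10, Complex.normSq_eq_conj_mul_self,
      ← Complex.star_def, Complex.ofReal_zero]
    linear_combination ρ 0 1 * (w 0 1 1 : ℂ) * cross10 + ρ 1 0 * (w 1 0 1 : ℂ) * cross01 +
      ρ 1 1 * (w 1 1 0 : ℂ) * (row0 - col0)
  simpa only [Complex.re_sum, Complex.re_mul_ofReal, Complex.re_ofReal_mul, Complex.add_re]
    using congrArg Complex.re key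

section Qubit

variable {u : ℝ → ℝ} {ε : Fin 2 → ℝ} {v : Fin 2 → Fin 2 → ℂ}

/-- `S(ρ)`: the expected utility `⟨u(w)⟩_{ρ,U}` (at `q = 1/2`) of the swap `U` of the two levels. -/
def swapUtil (u : ℝ → ℝ) (ε : Fin 2 → ℝ) (v : Fin 2 → Fin 2 → ℂ)
    (ρ : Matrix (Fin 2) (Fin 2) ℂ) : ℝ :=
  (matElem ρ (v 0) (v 0)).re * u (-(ε 1 - ε 0)) + (matElem ρ (v 1) (v 1)).re * u (ε 1 - ε 0)

lemma expUtil_half_eq (hu0 : u 0 = 0) (hZ : u ((ε 1 - ε 0)/2) - u (-((ε 1 - ε 0)/2)) = 0)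
    (hv : ONFam v) (ρ : Matrix (Fin 2) (Fin 2) ℂ) {U : Matrix (Fin 2) (Fin 2) ℂ}
    (hU : U ∈ unitaryGroup (Fin 2) ℂ) :
    expUtil u (1/2) ε v ρ U = Complex.normSq (matElem U (v 1) (v 0)) * swapUtil u ε v ρ := by
  have hUh : (basisMatrix v)ᴴ * Uᴴ * basisMatrix v = ((basisMatrix v)ᴴ * U * basisMatrix v)ᴴ := by
    simp only [conjTranspose_mul, conjTranspose_conjTranspose, Matrix.mul_assoc]
  have harg : ∀ i j k : Fin 2, 1/2 * ε i + (1 - 1/2) * ε j - ε k = (ε i + ε j) / 2 - ε k :=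
    fun _ _ _ => by ring
  have hdiag : ∀ i, u ((ε i + ε i) / 2 - ε i) = 0 := fun i => by ring_nf; exact hu0
  have hoff : u ((ε 0 + ε 1) / 2 - ε 0) = u ((ε 0 + ε 1) / 2 - ε 1) := by
    rw [show (ε 0 + ε 1) / 2 - ε 0 = (ε 1 - ε 0) / 2 by ring,
      show (ε 0 + ε 1) / 2 - ε 1 = -((ε 1 - ε 0) / 2) by ring]
    linarith
  simp only [expUtil, swapUtil, matElem_eq_conj_apply, hUh, conjTranspose_apply, harg]
  rw [sum_re_mul_star_mul_of_unitary (conj_mem_unitaryGroup hv hU) _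
    (fun i j k => u ((ε i + ε j) / 2 - ε k)) (hdiag 0) (hdiag 1) hoff
    (by rw [add_comm]; exact hoff)]
  ring_nf

lemma pauliX_mem_unitaryGroup : !![0, 1; 1, 0] ∈ unitaryGroup (Fin 2) ℂ := by
  rw [mem_unitaryGroup_iff']
  ext i j
  fin_cases i <;> fin_cases j <;> simp [Matrix.mul_apply]

lemma optUtil_half_eq (hu0 : u 0 = 0) (hZ : u ((ε 1 - ε 0)/2) - u (-((ε 1 - ε 0)/2)) = 0)
    (hv : ONFam v) (ρ : Matrix (Fin 2) (Fin 2) ℂ) :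
    optUtil u (1/2) ε v ρ = max 0 (swapUtil u ε v ρ) := by
  have hexp (U : unitaryGroup (Fin 2) ℂ) := expUtil_half_eq hu0 hZ hv ρ U.2
  have hbound (U : unitaryGroup (Fin 2) ℂ) :
      expUtil u (1/2) ε v ρ (U : Matrix (Fin 2) (Fin 2) ℂ) ≤ max 0 (swapUtil u ε v ρ) := by
    rw [hexp]
    calc _ ≤ Complex.normSq (matElem (U : Matrix (Fin 2) (Fin 2) ℂ) (v 1) (v 0)) *
          max 0 (swapUtil u ε v ρ) :=
          mul_le_mul_of_nonneg_left (le_max_right _ _) (Complex.normSq_nonneg _)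
      _ ≤ _ := mul_le_of_le_one_left (le_max_left _ _) (normSq_matElem_le_one hv U.2 1 0)
  have hbdd : BddAbove (Set.range fun U : unitaryGroup (Fin 2) ℂ =>
      expUtil u (1/2) ε v ρ (U : Matrix (Fin 2) (Fin 2) ℂ)) :=
    ⟨_, Set.forall_mem_range.2 hbound⟩
  have hW := basisMatrix_mem_unitaryGroup hv
  let swap : unitaryGroup (Fin 2) ℂ :=
    ⟨basisMatrix v * !![0, 1; 1, 0] * (basisMatrix v)ᴴ,
      mul_mem (mul_mem hW pauliX_mem_unitaryGroup) (Unitary.star_mem hW)⟩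
  refine le_antisymm (ciSup_le hbound)
    (max_le (le_ciSup_of_le hbdd 1 ?_) (le_ciSup_of_le hbdd swap ?_))
  · rw [hexp, OneMemClass.coe_one, matElem_one hv]
    simp
  · rw [hexp, matElem_basisMatrix_conj hv]
    simp

end Qubit

lemma sum_max_zero_of_forall_nonpos_or_forall_nonneg {ι : Type*} (s : Finset ι) (f : ι → ℝ)
    (h : (∀ i ∈ s, f i ≤ 0) ∨ (∀ i ∈ s, 0 ≤ f i)) :
    ∑ i ∈ s, max 0 (f i) = max 0 (∑ i ∈ s, f i) := by
  rcases h with h | h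
  · rw [max_eq_left (Finset.sum_nonpos h)]
    exact Finset.sum_eq_zero fun i hi => max_eq_left (h i hi)
  · rw [max_eq_right (Finset.sum_nonneg h)]
    exact Finset.sum_congr rfl fun i hi => max_eq_right (h i hi)

section Ancilla

variable {dS dA : ℕ}

lemma matElem_condUnnorm_self (w : Fin dA → Fin dA → ℂ)
    (ρSA : Matrix (Fin dS × Fin dA) (Fin dS × Fin dA) ℂ) (a : Fin dA) (x : Fin dS → ℂ) :
    matElem (condUnnorm w ρSA a) x x =
      star (fun p : Fin dS × Fin dA => x p.1 * w a p.2) ⬝ᵥ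
        (ρSA *ᵥ fun p => x p.1 * w a p.2) := by
  simp only [matElem, dotProduct, mulVec, condUnnorm, of_apply, Pi.star_apply,
    Fintype.sum_prod_type, Finset.mul_sum, Finset.sum_mul, star_mul']
  refine Finset.sum_congr rfl fun i _ => ?_
  rw [Finset.sum_comm]
  exact Finset.sum_congr rfl fun _ _ => Finset.sum_congr rfl fun _ _ =>
    Finset.sum_congr rfl fun _ _ => by ring

lemma re_matElem_condUnnorm_self_nonneg {ρSA : Matrix (Fin dS × Fin dA) (Fin dS × Fin dA) ℂ}
    (hρ : ρSA.PosSemidef) (w : Fin dA → Fin dA → ℂ) (a : Fin dA) (x : Fin dS → ℂ) :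
    0 ≤ (matElem (condUnnorm w ρSA a) x x).re := by
  rw [matElem_condUnnorm_self]
  exact (Complex.le_def.mp (hρ.dotProduct_mulVec_nonneg _)).1

lemma sum_condUnnorm {V : Matrix (Fin dA) (Fin dA) ℂ} (hV : V ∈ unitaryGroup (Fin dA) ℂ)
    (ρSA : Matrix (Fin dS × Fin dA) (Fin dS × Fin dA) ℂ) :
    ∑ a, condUnnorm (fun a => V a) ρSA a = ptraceA ρSA := by
  have hVV := mem_unitaryGroup_iff'.mp hV
  ext i j
  simp only [Matrix.sum_apply, condUnnorm, ptraceA, of_apply]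
  rw [Finset.sum_comm]
  refine Finset.sum_congr rfl fun c _ => ?_
  rw [Finset.sum_comm]
  calc ∑ d, ∑ a, ρSA (i, c) (j, d) * (V a d * star (V a c))
      = ∑ d, ρSA (i, c) (j, d) * (star V * V) c d := by
        refine Finset.sum_congr rfl fun d _ => ?_
        simp only [Finset.mul_sum, Matrix.mul_apply, star_apply]
        exact Finset.sum_congr rfl fun _ _ => by ring
    _ = ρSA (i, c) (j, c) := by simp [hVV, Matrix.one_apply]

end Ancilla

section QubitAncilla

variable {u : ℝ → ℝ} {ε : Fin 2 → ℝ} {v : Fin 2 → Fin 2 → ℂ} {dA : ℕ}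

lemma swapUtil_ofReal_smul (r : ℝ) (ρ : Matrix (Fin 2) (Fin 2) ℂ) :
    swapUtil u ε v ((r : ℂ) • ρ) = r * swapUtil u ε v ρ := by
  simp only [swapUtil, matElem_smul, Complex.re_ofReal_mul]
  ring

lemma swapUtil_sum {ι : Type*} (s : Finset ι) (ρ : ι → Matrix (Fin 2) (Fin 2) ℂ) :
    swapUtil u ε v (∑ a ∈ s, ρ a) = ∑ a ∈ s, swapUtil u ε v (ρ a) := by
  simp only [swapUtil, matElem_sum, Complex.re_sum, Finset.sum_mul, Finset.sum_add_distrib]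

lemma swapUtil_sign
    (hsign : (u (-(ε 1 - ε 0)) ≤ 0 ∧ u (ε 1 - ε 0) ≤ 0) ∨
      (0 ≤ u (-(ε 1 - ε 0)) ∧ 0 ≤ u (ε 1 - ε 0))) :
    (∀ ρ, (∀ i, 0 ≤ (matElem ρ (v i) (v i)).re) → swapUtil u ε v ρ ≤ 0) ∨
      (∀ ρ, (∀ i, 0 ≤ (matElem ρ (v i) (v i)).re) → 0 ≤ swapUtil u ε v ρ) := by
  rcases hsign with ⟨hdown, hup⟩ | ⟨hdown, hup⟩
  · exact .inl fun ρ hρ => add_nonpos (mul_nonpos_of_nonneg_of_nonpos (hρ 0) hdown)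
      (mul_nonpos_of_nonneg_of_nonpos (hρ 1) hup)
  · exact .inr fun ρ hρ => add_nonneg (mul_nonneg (hρ 0) hdown) (mul_nonneg (hρ 1) hup)

lemma prob_mul_optUtil_condState (hu0 : u 0 = 0)
    (hZ : u ((ε 1 - ε 0)/2) - u (-((ε 1 - ε 0)/2)) = 0) (hv : ONFam v)
    {ρSA : Matrix (Fin 2 × Fin dA) (Fin 2 × Fin dA) ℂ} (hρ : ρSA.PosSemidef)
    (w : Fin dA → Fin dA → ℂ) (a : Fin dA) :
    prob w ρSA a * optUtil u (1/2) ε v (condState w ρSA a) =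
      max 0 (swapUtil u ε v (condUnnorm w ρSA a)) := by
  have h0 := re_matElem_condUnnorm_self_nonneg hρ w a (v 0)
  have h1 := re_matElem_condUnnorm_self_nonneg hρ w a (v 1)
  have hp : prob w ρSA a = (matElem (condUnnorm w ρSA a) (v 0) (v 0)).re +
      (matElem (condUnnorm w ρSA a) (v 1) (v 1)).re := by
    rw [prob, trace_eq_sum_matElem hv, Fin.sum_univ_two, Complex.add_re]
  rw [optUtil_half_eq hu0 hZ hv, condState, ← Complex.ofReal_inv, swapUtil_ofReal_smul]
  rcases (hp ▸ add_nonneg h0 h1 : 0 ≤ prob w ρSA a).eq_or_lt with hp0 | hpos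
  · -- `condState` is `0⁻¹ • M = 0` here, and the populations of `M` vanish.
    have hd0 : (matElem (condUnnorm w ρSA a) (v 0) (v 0)).re = 0 := by linarith
    have hd1 : (matElem (condUnnorm w ρSA a) (v 1) (v 1)).re = 0 := by linarith
    simp [← hp0, swapUtil, hd0, hd1]
  · rw [mul_max_of_nonneg _ _ hpos.le, mul_zero, mul_inv_cancel_left₀ hpos.ne']

lemma daemonicUtil_half_eq_optUtil_ptraceA (hu0 : u 0 = 0)
    (hZ : u ((ε 1 - ε 0)/2) - u (-((ε 1 - ε 0)/2)) = 0) (hv : ONFam v)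
    (hsign : (u (-(ε 1 - ε 0)) ≤ 0 ∧ u (ε 1 - ε 0) ≤ 0) ∨
      (0 ≤ u (-(ε 1 - ε 0)) ∧ 0 ≤ u (ε 1 - ε 0)))
    {ρSA : Matrix (Fin 2 × Fin dA) (Fin 2 × Fin dA) ℂ} (hρ : ρSA.PosSemidef)
    {V : Matrix (Fin dA) (Fin dA) ℂ} (hV : V ∈ unitaryGroup (Fin dA) ℂ) :
    daemonicUtil u (1/2) ε v (fun a => V a) ρSA = optUtil u (1/2) ε v (ptraceA ρSA) := by
  have hdiag (a : Fin dA) (i : Fin 2) :=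
    re_matElem_condUnnorm_self_nonneg hρ (fun a => V a) a (v i)
  calc daemonicUtil u (1/2) ε v (fun a => V a) ρSA
      = ∑ a, max 0 (swapUtil u ε v (condUnnorm (fun a => V a) ρSA a)) :=
        Finset.sum_congr rfl fun a _ => prob_mul_optUtil_condState hu0 hZ hv hρ _ a
    _ = max 0 (∑ a, swapUtil u ε v (condUnnorm (fun a => V a) ρSA a)) :=
        sum_max_zero_of_forall_nonpos_or_forall_nonneg _ _ <|
          (swapUtil_sign hsign).imp (fun h a _ => h _ (hdiag a)) (fun h a _ => h _ (hdiag a))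
    _ = optUtil u (1/2) ε v (ptraceA ρSA) := by
        rw [← swapUtil_sum, sum_condUnnorm hV, optUtil_half_eq hu0 hZ hv]

end QubitAncilla

theorem stmt13_general {dA : ℕ} (u : ℝ → ℝ) (hu0 : u 0 = 0)
    (ε : Fin 2 → ℝ)
    (v : Fin 2 → Fin 2 → ℂ) (hv : ONFam v)
    (hZ : u ((ε 1 - ε 0)/2) - u (-((ε 1 - ε 0)/2)) = 0)
    (X Y : ℝ) (hX : X = u (ε 1 - ε 0)) (hY : Y = u (ε 1 - ε 0) - u (-(ε 1 - ε 0)))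
    (hcase : (∀ t ∈ Set.Icc (0:ℝ) 1, X - t * Y ≤ 0) ∨
      (∀ t ∈ Set.Icc (0:ℝ) 1, 0 < X - t * Y)) :
    ∀ ρSA : Matrix (Fin 2 × Fin dA) (Fin 2 × Fin dA) ℂ, IsDensity ρSA →
      daemonicGain u (1/2) ε v ρSA = 0 := by
  intro ρSA hρ
  have hsign : (u (-(ε 1 - ε 0)) ≤ 0 ∧ u (ε 1 - ε 0) ≤ 0) ∨
      (0 ≤ u (-(ε 1 - ε 0)) ∧ 0 ≤ u (ε 1 - ε 0)) := by
    subst hX hY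
    rcases hcase with h | h
    · have ht0 := h 0 (by simp)
      have ht1 := h 1 (by simp)
      exact .inl ⟨by linarith, by linarith⟩
    · have ht0 := h 0 (by simp)
      have ht1 := h 1 (by simp)
      exact .inr ⟨by linarith, by linarith⟩
  have hdaemon (V : unitaryGroup (Fin dA) ℂ) :=
    daemonicUtil_half_eq_optUtil_ptraceA hu0 hZ hv hsign hρ.1 V.2
  rw [daemonicGain, iSup_congr hdaemon, ciSup_const, sub_self]

/-- for a qubit system, `q = 1/2` and an incoherent utility (`Z = 0`), if
`X - qY ≤ 0` on all of `[0,1]`, or `X - qY > 0` on all of `[0,1]`, then the maximum daemonic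
gain vanishes for every bipartite density matrix. -/
theorem stmt13 {dA : ℕ} (u : ℝ → ℝ) (hu0 : u 0 = 0)
    (ε : Fin 2 → ℝ) (hε : ε 0 < ε 1)
    (v : Fin 2 → Fin 2 → ℂ) (hv : ONFam v)
    (hZ : u ((ε 1 - ε 0)/2) - u (-((ε 1 - ε 0)/2)) = 0)
    (X Y : ℝ) (hX : X = u (ε 1 - ε 0)) (hY : Y = u (ε 1 - ε 0) - u (-(ε 1 - ε 0)))
    (hcase : (∀ t ∈ Set.Icc (0:ℝ) 1, X - t * Y ≤ 0) ∨
      (∀ t ∈ Set.Icc (0:ℝ) 1, 0 < X - t * Y)) :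
    ∀ ρSA : Matrix (Fin 2 × Fin dA) (Fin 2 × Fin dA) ℂ, IsDensity ρSA →
      daemonicGain u (1/2) ε v ρSA = 0 :=
  stmt13_general u hu0 ε v hv hZ X Y hX hY hcase

end Daemonic
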